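/- arXiv:0706.3781 — 3 statements merged into one kernel-verified Lean document; each statement's English description precedes it below -/
import Mathlib

section
/- Momentum conservation under coalescence: the momentum moment of the coalescence term vanishes, i.e. ∫_{ℝ³} ∫₀^∞ v u Γ(v,u) dv du = 0 (as a vector in ℝ³, i.e. ∫∫ v u_j Γ dv du = 0 for each component j = 1,2,3). -/
open MeasureTheory Set

noncomputable section

abbrev V3 := Fin 3 → ℝ

/-- `β(v,v*) = π [(3v/(4π))^{1/3} + (3v*/(4π))^{1/3}]²`. -/
noncomputable def collBeta (v vs : ℝ) : ℝ :=
  Real.pi * ((3 * v / (4 * Real.pi)) ^ ((1:ℝ)/3) + (3 * vs / (4 * Real.pi)) ^ ((1:ℝ)/3)) ^ 2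

/-- Collision frequency `B(r, v, v*) = β(v,v*) r` with `r = |u - u*|`. -/
noncomputable def collB (r v vs : ℝ) : ℝ := collBeta v vs * r

/-- Coalescence loss term `Q⁻`. -/
noncomputable def Qminus (f : ℝ × V3 → ℝ) (v : ℝ) (u : V3) : ℝ :=
  - ∫ us : V3, ∫ vs in Ioi (0:ℝ), collB ‖u - us‖ v vs * f (v, u) * f (vs, us)

/-- Coalescence gain term `Q⁺`, with `v⋄ = v - v*`, `u⋄ = (v u - v* u*)/(v - v*)`,
and Jacobian `J = (v/v⋄)³`. -/
noncomputable def Qplus (f : ℝ × V3 → ℝ) (v : ℝ) (u : V3) : ℝ :=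
  (1/2) * ∫ us : V3, ∫ vs in Ioo (0:ℝ) v,
    collB ‖(v - vs)⁻¹ • (v • u - vs • us) - us‖ (v - vs) vs *
      f (v - vs, (v - vs)⁻¹ • (v • u - vs • us)) * f (vs, us) * (v / (v - vs)) ^ 3

/-- Coalescence operator `Γ = Q⁻ + Q⁺`. -/
noncomputable def coalGamma (f : ℝ × V3 → ℝ) (v : ℝ) (u : V3) : ℝ :=
  Qminus f v u + Qplus f v u


/-!
Write `p ⊕ q` for the droplet formed by coalescence of `p = (v, u)` and `q = (v*, u*)`: it has
volume `v + v*` and velocity `(v u + v* u*)/(v + v*)`, so the momentum `v uⱼ` is additive under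
`⊕`. For fixed `q`, substituting `p⋄` for `p` in `∫ φ(p) Q⁺(p) dp` is affine in the velocity,
with `dp = (v⋄/v)³ dp⋄`, and the factor `J` cancels this; the result is the weak form
`∫ φ Γ = ½ ∫∫ φ(p ⊕ q) K(p, q) - ∫∫ φ(p) K(p, q)` with the symmetric kernel
`K(p, q) = B f(p) f(q)`. For `φ = v uⱼ` additivity and the symmetry of `K` make the two terms
cancel.
-/

namespace Coalescence

theorem integral_setIntegral_eq_integral_prod {α β E : Type*} [MeasurableSpace α]
    [MeasurableSpace β] [NormedAddCommGroup E] [NormedSpace ℝ E] {μ : Measure α} {ν : Measure β}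
    [SFinite μ] [SFinite ν] {s : Set α} {g : α × β → E} (hg : Integrable g (μ.prod ν))
    (hs : ∀ z : α × β, z.1 ∉ s → g z = 0) :
    ∫ y, ∫ x in s, g (x, y) ∂μ ∂ν = ∫ z, g z ∂μ.prod ν := by
  rw [integral_prod_symm _ hg]
  exact integral_congr_ae (ae_of_all _ fun y =>
    setIntegral_eq_integral_of_forall_compl_eq_zero fun x hx => hs (x, y) hx)

/-- The droplet `(v⋄, u⋄)` which coalesces with `q = (v*, u*)` into `p = (v, u)`. -/
def partner (q p : ℝ × V3) : ℝ × V3 :=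
  (p.1 - q.1, (p.1 - q.1)⁻¹ • (p.1 • p.2 - q.1 • q.2))

def coalesce (p q : ℝ × V3) : ℝ × V3 :=
  (p.1 + q.1, (p.1 + q.1)⁻¹ • (p.1 • p.2 + q.1 • q.2))

def jacobian (q p : ℝ × V3) : ℝ := (p.1 / (p.1 - q.1)) ^ 3

theorem coalesce_partner {p q : ℝ × V3} (hq : 0 ≤ q.1) (hqp : q.1 < p.1) :
    coalesce (partner q p) q = p := by
  have hp : p.1 ≠ 0 := (hq.trans_lt hqp).ne'
  have hpq : p.1 - q.1 ≠ 0 := (sub_pos.2 hqp).ne'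
  ext <;> simp [coalesce, partner, smul_smul, mul_inv_cancel₀ hpq, hp]

theorem partner_mk (q : ℝ × V3) (v : ℝ) (u : V3) :
    partner q (v, u) = (v - q.1, (v / (v - q.1)) • u - ((v - q.1)⁻¹ * q.1) • q.2) := by
  simp [partner, smul_sub, smul_smul, div_eq_inv_mul]

section ChangeOfVariables

variable {n : ℝ × V3 → ℝ} {q : ℝ × V3}

theorem comp_partner_eq_zero (hn0 : ∀ p : ℝ × V3, p.1 ≤ 0 → n p = 0) {p : ℝ × V3}
    (hpq : p.1 ≤ q.1) : n (partner q p) = 0 :=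
  hn0 _ (sub_nonpos.2 hpq)

theorem norm_comp_partner_mul_jacobian (hq : 0 ≤ q.1) (hn0 : ∀ p : ℝ × V3, p.1 ≤ 0 → n p = 0)
    (p : ℝ × V3) : ‖n (partner q p) * jacobian q p‖ = ‖n (partner q p)‖ * jacobian q p := by
  rcases le_or_gt p.1 q.1 with hpq | hqp
  · simp [comp_partner_eq_zero hn0 hpq]
  · have hJ : 0 ≤ jacobian q p := pow_nonneg (div_pos (hq.trans_lt hqp) (sub_pos.2 hqp)).le _
    rw [norm_mul, Real.norm_of_nonneg hJ]

theorem integral_comp_partner_mul_jacobian_slice (hq : 0 ≤ q.1)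
    (hn0 : ∀ p : ℝ × V3, p.1 ≤ 0 → n p = 0) (v : ℝ) :
    ∫ u, n (partner q (v, u)) * jacobian q (v, u) = ∫ u, n (v - q.1, u) := by
  rcases le_or_gt v q.1 with hvq | hqv
  · simp [comp_partner_eq_zero (q := q) hn0 (p := (v, _)) hvq, hn0 (v - q.1, _) (by simpa)]
  set c := v / (v - q.1)
  have hc : 0 < c := div_pos (hq.trans_lt hqv) (sub_pos.2 hqv)
  set d := ((v - q.1)⁻¹ * q.1) • q.2
  calc ∫ u, n (partner q (v, u)) * jacobian q (v, u)
      = ∫ u, (fun y => n (v - q.1, y - d)) (c • u) * c ^ 3 := by simp_rw [partner_mk]; rfl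
    _ = ∫ u, n (v - q.1, u) := by
      rw [integral_mul_const, Measure.integral_comp_smul volume (fun y => n (v - q.1, y - d)),
        integral_sub_right_eq_self
        (fun y => n (v - q.1, y)), Module.finrank_fin_fun, abs_of_pos (by positivity), smul_eq_mul]
      field_simp

theorem integrable_comp_partner_mul_jacobian_slice (hq : 0 ≤ q.1)
    (hn0 : ∀ p : ℝ × V3, p.1 ≤ 0 → n p = 0) {v : ℝ}
    (hn : Integrable fun u => n (v - q.1, u)) :
    Integrable fun u => n (partner q (v, u)) * jacobian q (v, u) := by
  rcases le_or_gt v q.1 with hvq | hqv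
  · simp [comp_partner_eq_zero (q := q) hn0 (p := (v, _)) hvq]
  have hc : v / (v - q.1) ≠ 0 := (div_pos (hq.trans_lt hqv) (sub_pos.2 hqv)).ne'
  simp_rw [partner_mk, jacobian]
  exact ((hn.comp_sub_right _).comp_smul hc).mul_const _

theorem integrable_comp_partner_mul_jacobian (hq : 0 ≤ q.1)
    (hn0 : ∀ p : ℝ × V3, p.1 ≤ 0 → n p = 0) (hnm : Measurable n) (hn : Integrable n) :
    Integrable fun p => n (partner q p) * jacobian q p := by
  have hm : Measurable fun p => n (partner q p) * jacobian q p := by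
    unfold partner jacobian; fun_prop
  refine (integrable_prod_iff hm.aestronglyMeasurable).2 ⟨?_, ?_⟩
  · filter_upwards [(measurePreserving_sub_right volume q.1).quasiMeasurePreserving.ae
      hn.prod_right_ae] with v hv
    exact integrable_comp_partner_mul_jacobian_slice hq hn0 hv
  · have hn0' : ∀ p : ℝ × V3, p.1 ≤ 0 → ‖n p‖ = 0 := fun p hp => by simp [hn0 p hp]
    refine (hn.integral_norm_prod_left.comp_sub_right q.1).congr (ae_of_all _ fun v => ?_)
    simp_rw [norm_comp_partner_mul_jacobian hq hn0]
    exact (integral_comp_partner_mul_jacobian_slice (n := fun p => ‖n p‖) hq hn0' v).symm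

theorem integral_comp_partner_mul_jacobian (hq : 0 ≤ q.1)
    (hn0 : ∀ p : ℝ × V3, p.1 ≤ 0 → n p = 0) (hnm : Measurable n) (hn : Integrable n) :
    ∫ p, n (partner q p) * jacobian q p = ∫ p, n p := by
  rw [Measure.volume_eq_prod, integral_prod _ (integrable_comp_partner_mul_jacobian hq hn0 hnm hn),
    integral_prod _ hn]
  simp_rw [integral_comp_partner_mul_jacobian_slice hq hn0]
  exact integral_sub_right_eq_self (fun v => ∫ u, n (v, u)) q.1

end ChangeOfVariables

section Prod

variable {N : (ℝ × V3) × (ℝ × V3) → ℝ}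

theorem integrable_comp_partner_mul_jacobian_prod
    (hN0 : ∀ p q : ℝ × V3, p.1 ≤ 0 ∨ q.1 ≤ 0 → N (p, q) = 0) (hNm : Measurable N)
    (hN : Integrable N) :
    Integrable fun x : (ℝ × V3) × (ℝ × V3) => N (partner x.2 x.1, x.2) * jacobian x.2 x.1 := by
  have hm : Measurable fun x : (ℝ × V3) × (ℝ × V3) =>
      N (partner x.2 x.1, x.2) * jacobian x.2 x.1 := by
    unfold partner jacobian; fun_prop
  refine (integrable_prod_iff' hm.aestronglyMeasurable).2 ⟨?_, ?_⟩
  · filter_upwards [hN.prod_left_ae] with q hq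
    rcases le_or_gt q.1 0 with hq0 | hq0
    · simp [hN0 _ _ (Or.inr hq0)]
    · exact integrable_comp_partner_mul_jacobian hq0.le (fun p hp => hN0 p q (Or.inl hp))
        (hNm.comp (by fun_prop)) hq
  · refine hN.integral_norm_prod_right.congr ?_
    filter_upwards [hN.prod_left_ae] with q hq
    rcases le_or_gt q.1 0 with hq0 | hq0
    · simp [hN0 _ _ (Or.inr hq0)]
    · simp_rw [norm_comp_partner_mul_jacobian hq0.le (fun p hp => hN0 p q (Or.inl hp))]
      exact (integral_comp_partner_mul_jacobian (n := fun p => ‖N (p, q)‖) hq0.le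
        (fun p hp => by simp [hN0 p q (Or.inl hp)]) (hNm.comp (by fun_prop)).norm hq.norm).symm

theorem integral_comp_partner_mul_jacobian_prod
    (hN0 : ∀ p q : ℝ × V3, p.1 ≤ 0 ∨ q.1 ≤ 0 → N (p, q) = 0) (hNm : Measurable N)
    (hN : Integrable N) :
    ∫ x : (ℝ × V3) × (ℝ × V3), N (partner x.2 x.1, x.2) * jacobian x.2 x.1 = ∫ x, N x := by
  rw [Measure.volume_eq_prod, integral_prod_symm _
    (integrable_comp_partner_mul_jacobian_prod hN0 hNm hN), integral_prod_symm _ hN]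
  refine integral_congr_ae ?_
  filter_upwards [hN.prod_left_ae] with q hq
  rcases le_or_gt q.1 0 with hq0 | hq0
  · simp [hN0 _ _ (Or.inr hq0)]
  · exact integral_comp_partner_mul_jacobian hq0.le (fun p hp => hN0 p q (Or.inl hp))
      (hNm.comp (by fun_prop)) hq

end Prod

def kernel (f : ℝ × V3 → ℝ) (p q : ℝ × V3) : ℝ := collB ‖p.2 - q.2‖ p.1 q.1 * f p * f q

def gain (f : ℝ × V3 → ℝ) (p q : ℝ × V3) : ℝ := kernel f (partner q p) q * jacobian q p

section Kernel

variable {f : ℝ × V3 → ℝ}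

theorem kernel_comm (f : ℝ × V3 → ℝ) (p q : ℝ × V3) : kernel f p q = kernel f q p := by
  simp only [kernel, collB, collBeta, norm_sub_rev p.2]
  ring

theorem apply_eq_zero_of_fst_nonpos (hf_supp : Function.support f ⊆ Ioi (0:ℝ) ×ˢ (univ : Set V3))
    {p : ℝ × V3} (hp : p.1 ≤ 0) : f p = 0 :=
  Function.notMem_support.1 fun h => (hf_supp h).1.not_ge hp

theorem kernel_eq_zero_of_nonpos (hf_supp : Function.support f ⊆ Ioi (0:ℝ) ×ˢ (univ : Set V3))
    {p q : ℝ × V3} (h : p.1 ≤ 0 ∨ q.1 ≤ 0) : kernel f p q = 0 := by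
  rcases h with h | h <;> simp [kernel, apply_eq_zero_of_fst_nonpos hf_supp h]

theorem continuous_collBeta : Continuous fun x : ℝ × ℝ => collBeta x.1 x.2 := by
  unfold collBeta
  fun_prop (disch := norm_num)

theorem continuous_kernel (hf : Continuous f) :
    Continuous fun x : (ℝ × V3) × (ℝ × V3) => kernel f x.1 x.2 := by
  have := continuous_collBeta
  unfold kernel collB
  fun_prop

theorem integrable_mul_kernel (hf : Continuous f) (hf_cpt : HasCompactSupport f)
    {w : (ℝ × V3) × (ℝ × V3) → ℝ} (hw : Continuous w) :
    Integrable fun x : (ℝ × V3) × (ℝ × V3) => w x * kernel f x.1 x.2 := by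
  refine (hw.mul (continuous_kernel hf)).integrable_of_hasCompactSupport
    (HasCompactSupport.mul_left (HasCompactSupport.intro (hf_cpt.prod hf_cpt) fun x hx => ?_))
  rcases not_and_or.1 hx with h | h <;> simp [kernel, image_eq_zero_of_notMem_tsupport h]

theorem integrable_kernel_right (hf : Continuous f) (hf_cpt : HasCompactSupport f)
    (p : ℝ × V3) : Integrable fun q => kernel f p q :=
  ((continuous_kernel hf).comp (Continuous.prodMk_right p)).integrable_of_hasCompactSupport
    (HasCompactSupport.intro hf_cpt fun q hq => by
      simp [kernel, image_eq_zero_of_notMem_tsupport hq])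

theorem Qminus_eq_neg_integral_kernel (hf : Continuous f) (hf_cpt : HasCompactSupport f)
    (hf_supp : Function.support f ⊆ Ioi (0:ℝ) ×ˢ (univ : Set V3)) (p : ℝ × V3) :
    Qminus f p.1 p.2 = -∫ q, kernel f p q :=
  congrArg Neg.neg (integral_setIntegral_eq_integral_prod (integrable_kernel_right hf hf_cpt p)
    fun _ hq => kernel_eq_zero_of_nonpos hf_supp (Or.inr (not_lt.1 hq)))

theorem Qplus_eq_integral_gain (hf_supp : Function.support f ⊆ Ioi (0:ℝ) ×ˢ (univ : Set V3))
    (p : ℝ × V3) (hp : Integrable fun q => gain f p q) :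
    Qplus f p.1 p.2 = 2⁻¹ * ∫ q, gain f p q := by
  rw [← one_div]
  refine congrArg _ (integral_setIntegral_eq_integral_prod hp fun q hq => ?_)
  refine mul_eq_zero_of_left (kernel_eq_zero_of_nonpos hf_supp ?_) _
  by_contra! h
  exact hq ⟨h.2, sub_pos.1 h.1⟩

theorem mul_gain_eq (hf_supp : Function.support f ⊆ Ioi (0:ℝ) ×ˢ (univ : Set V3))
    (φ : ℝ × V3 → ℝ) (p q : ℝ × V3) :
    φ p * gain f p q =
      φ (coalesce (partner q p) q) * kernel f (partner q p) q * jacobian q p := by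
  by_cases h : 0 < q.1 ∧ q.1 < p.1
  · rw [coalesce_partner h.1.le h.2, gain, mul_assoc]
  · have : (partner q p).1 ≤ 0 ∨ q.1 ≤ 0 := by
      simp only [partner, sub_nonpos]; by_contra!; exact h ⟨this.2, this.1⟩
    simp [gain, kernel_eq_zero_of_nonpos hf_supp this]

theorem measurable_coalesce : Measurable fun x : (ℝ × V3) × (ℝ × V3) => coalesce x.1 x.2 := by
  unfold coalesce; fun_prop

section Gain

variable {φ : ℝ × V3 → ℝ}

theorem integrable_mul_gain (hf : Continuous f)
    (hf_supp : Function.support f ⊆ Ioi (0:ℝ) ×ˢ (univ : Set V3)) (hφ : Measurable φ)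
    (hφK : Integrable fun x : (ℝ × V3) × (ℝ × V3) => φ (coalesce x.1 x.2) * kernel f x.1 x.2) :
    Integrable fun x : (ℝ × V3) × (ℝ × V3) => φ x.1 * gain f x.1 x.2 := by
  simp_rw [mul_gain_eq hf_supp]
  exact integrable_comp_partner_mul_jacobian_prod
    (N := fun x => φ (coalesce x.1 x.2) * kernel f x.1 x.2)
    (fun p q h => by simp [kernel_eq_zero_of_nonpos hf_supp h])
    ((hφ.comp measurable_coalesce).mul (continuous_kernel hf).measurable) hφK

theorem integral_mul_gain (hf : Continuous f)
    (hf_supp : Function.support f ⊆ Ioi (0:ℝ) ×ˢ (univ : Set V3)) (hφ : Measurable φ)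
    (hφK : Integrable fun x : (ℝ × V3) × (ℝ × V3) => φ (coalesce x.1 x.2) * kernel f x.1 x.2) :
    ∫ x : (ℝ × V3) × (ℝ × V3), φ x.1 * gain f x.1 x.2 =
      ∫ x : (ℝ × V3) × (ℝ × V3), φ (coalesce x.1 x.2) * kernel f x.1 x.2 := by
  simp_rw [mul_gain_eq hf_supp]
  exact integral_comp_partner_mul_jacobian_prod
    (N := fun x => φ (coalesce x.1 x.2) * kernel f x.1 x.2)
    (fun p q h => by simp [kernel_eq_zero_of_nonpos hf_supp h])
    ((hφ.comp measurable_coalesce).mul (continuous_kernel hf).measurable) hφK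

/-- Integrability of `q ↦ gain f p q`, needed to write `Q⁺` as one integral, is only known for
almost every `p`, by Fubini from `integrable_mul_gain`. -/
theorem mul_coalGamma_ae_eq (hf : Continuous f) (hf_cpt : HasCompactSupport f)
    (hf_supp : Function.support f ⊆ Ioi (0:ℝ) ×ˢ (univ : Set V3)) (hφ : Measurable φ)
    (hφK : Integrable fun x : (ℝ × V3) × (ℝ × V3) => φ (coalesce x.1 x.2) * kernel f x.1 x.2) :
    (fun p : ℝ × V3 => φ p * coalGamma f p.1 p.2) =ᵐ[volume]
      fun p => 2⁻¹ * (∫ q, φ p * gain f p q) - ∫ q, φ p * kernel f p q := by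
  filter_upwards [(integrable_mul_gain hf hf_supp hφ hφK).prod_right_ae] with p hp
  by_cases hφp : φ p = 0
  · simp [hφp]
  rw [coalGamma, Qminus_eq_neg_integral_kernel hf hf_cpt hf_supp,
    Qplus_eq_integral_gain hf_supp p ((integrable_const_mul_iff (isUnit_iff_ne_zero.2 hφp) _).1 hp),
    integral_const_mul, integral_const_mul]
  ring

theorem integrable_mul_coalGamma (hf : Continuous f) (hf_cpt : HasCompactSupport f)
    (hf_supp : Function.support f ⊆ Ioi (0:ℝ) ×ˢ (univ : Set V3)) (hφ : Continuous φ)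
    (hφK : Integrable fun x : (ℝ × V3) × (ℝ × V3) => φ (coalesce x.1 x.2) * kernel f x.1 x.2) :
    Integrable fun p : ℝ × V3 => φ p * coalGamma f p.1 p.2 := by
  refine Integrable.congr ?_ (mul_coalGamma_ae_eq hf hf_cpt hf_supp hφ.measurable hφK).symm
  exact ((integrable_mul_gain hf hf_supp hφ.measurable hφK).integral_prod_left.const_mul _).sub
    (integrable_mul_kernel hf hf_cpt (w := fun x => φ x.1) (by fun_prop)).integral_prod_left

theorem integral_mul_coalGamma (hf : Continuous f) (hf_cpt : HasCompactSupport f)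
    (hf_supp : Function.support f ⊆ Ioi (0:ℝ) ×ˢ (univ : Set V3)) (hφ : Continuous φ)
    (hφK : Integrable fun x : (ℝ × V3) × (ℝ × V3) => φ (coalesce x.1 x.2) * kernel f x.1 x.2) :
    ∫ p : ℝ × V3, φ p * coalGamma f p.1 p.2 =
      2⁻¹ * (∫ x : (ℝ × V3) × (ℝ × V3), φ (coalesce x.1 x.2) * kernel f x.1 x.2) -
        ∫ x : (ℝ × V3) × (ℝ × V3), φ x.1 * kernel f x.1 x.2 := by
  have hgain := integrable_mul_gain hf hf_supp hφ.measurable hφK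
  have hloss := integrable_mul_kernel hf hf_cpt (w := fun x => φ x.1) (by fun_prop)
  rw [integral_congr_ae (mul_coalGamma_ae_eq hf hf_cpt hf_supp hφ.measurable hφK),
    integral_sub (hgain.integral_prod_left.const_mul _) hloss.integral_prod_left,
    integral_const_mul, ← integral_mul_gain hf hf_supp hφ.measurable hφK]
  congr 1
  · exact congrArg _ (integral_prod _ hgain).symm
  · exact (integral_prod _ hloss).symm

end Gain

theorem integral_mul_kernel_swap (f φ : ℝ × V3 → ℝ) :
    ∫ x : (ℝ × V3) × (ℝ × V3), φ x.2 * kernel f x.1 x.2 =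
      ∫ x : (ℝ × V3) × (ℝ × V3), φ x.1 * kernel f x.1 x.2 := by
  refine Eq.trans (integral_congr_ae (ae_of_all _ fun x => ?_)) (integral_prod_swap _)
  exact congrArg _ (kernel_comm f x.1 x.2)

theorem coalGamma_eq_zero_of_nonpos
    (hf_supp : Function.support f ⊆ Ioi (0:ℝ) ×ˢ (univ : Set V3)) {v : ℝ} (hv : v ≤ 0) (u : V3) :
    coalGamma f v u = 0 := by
  simp [coalGamma, Qminus, Qplus, apply_eq_zero_of_fst_nonpos hf_supp (p := (v, u)) hv,
    Ioo_eq_empty_of_le hv]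

end Kernel

def momentum (j : Fin 3) (p : ℝ × V3) : ℝ := p.1 * p.2 j

theorem momentum_coalesce (j : Fin 3) {p q : ℝ × V3} (h : p.1 + q.1 ≠ 0) :
    momentum j (coalesce p q) = momentum j p + momentum j q := by
  simp only [momentum, coalesce, Pi.smul_apply, Pi.add_apply, smul_eq_mul]
  field_simp

theorem momentum_coalesce_mul_kernel {f : ℝ × V3 → ℝ}
    (hf_supp : Function.support f ⊆ Ioi (0:ℝ) ×ˢ (univ : Set V3)) (j : Fin 3) (p q : ℝ × V3) :
    momentum j (coalesce p q) * kernel f p q = (momentum j p + momentum j q) * kernel f p q := by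
  by_cases h : 0 < p.1 ∧ 0 < q.1
  · rw [momentum_coalesce j (by linarith)]
  · rw [kernel_eq_zero_of_nonpos hf_supp (by contrapose! h; exact h), mul_zero, mul_zero]

theorem continuous_momentum (j : Fin 3) : Continuous (momentum j) := by
  unfold momentum; fun_prop

section Momentum

variable {f : ℝ × V3 → ℝ}

theorem integrable_momentum_coalesce_mul_kernel (hf : Continuous f)
    (hf_cpt : HasCompactSupport f) (hf_supp : Function.support f ⊆ Ioi (0:ℝ) ×ˢ (univ : Set V3))
    (j : Fin 3) :
    Integrable fun x : (ℝ × V3) × (ℝ × V3) =>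
      momentum j (coalesce x.1 x.2) * kernel f x.1 x.2 := by
  simp_rw [momentum_coalesce_mul_kernel hf_supp]
  exact integrable_mul_kernel hf hf_cpt (by have := continuous_momentum j; fun_prop)

theorem integral_momentum_coalesce_mul_kernel (hf : Continuous f)
    (hf_cpt : HasCompactSupport f) (hf_supp : Function.support f ⊆ Ioi (0:ℝ) ×ˢ (univ : Set V3))
    (j : Fin 3) :
    ∫ x : (ℝ × V3) × (ℝ × V3), momentum j (coalesce x.1 x.2) * kernel f x.1 x.2 =
      2 * ∫ x : (ℝ × V3) × (ℝ × V3), momentum j x.1 * kernel f x.1 x.2 := by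
  have := continuous_momentum j
  simp_rw [momentum_coalesce_mul_kernel hf_supp, add_mul]
  rw [integral_add (integrable_mul_kernel hf hf_cpt (w := fun x => momentum j x.1) (by fun_prop))
    (integrable_mul_kernel hf hf_cpt (w := fun x => momentum j x.2) (by fun_prop)),
    integral_mul_kernel_swap, two_mul]

end Momentum

end Coalescence

open Coalescence

theorem coalescence_momentum_conservation_general
    (f : ℝ × V3 → ℝ) (hf_cont : Continuous f)
    (hf_cpt : HasCompactSupport f)
    (hf_supp : Function.support f ⊆ Ioi (0:ℝ) ×ˢ (univ : Set V3)) :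
    ∀ j : Fin 3, (∫ u : V3, ∫ v in Ioi (0:ℝ), v * u j * coalGamma f v u) = 0 := by
  intro j
  have hmom := integrable_momentum_coalesce_mul_kernel hf_cont hf_cpt hf_supp j
  have hint := integrable_mul_coalGamma hf_cont hf_cpt hf_supp (continuous_momentum j) hmom
  calc ∫ u : V3, ∫ v in Ioi (0:ℝ), v * u j * coalGamma f v u
      = ∫ p : ℝ × V3, momentum j p * coalGamma f p.1 p.2 :=
        integral_setIntegral_eq_integral_prod hint fun p hp => by
          rw [coalGamma_eq_zero_of_nonpos hf_supp (not_lt.1 hp), mul_zero]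
    _ = 0 := by
        rw [integral_mul_coalGamma hf_cont hf_cpt hf_supp (continuous_momentum j) hmom,
          integral_momentum_coalesce_mul_kernel hf_cont hf_cpt hf_supp]
        ring

/-- Momentum conservation under coalescence: the momentum moment of the
coalescence term vanishes componentwise, `∫∫ v uⱼ Γ(v,u) dv du = 0` for `j = 1,2,3`. -/
theorem coalescence_momentum_conservation
    (f : ℝ × V3 → ℝ) (hf_cont : Continuous f) (hf_nonneg : ∀ p, 0 ≤ f p)
    (hf_cpt : HasCompactSupport f)
    (hf_supp : Function.support f ⊆ Ioi (0:ℝ) ×ˢ (univ : Set V3)) :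
    ∀ j : Fin 3, (∫ u : V3, ∫ v in Ioi (0:ℝ), v * u j * coalGamma f v u) = 0 :=
  coalescence_momentum_conservation_general f hf_cont hf_cpt hf_supp
end
end

section
/- Droplet trajectories remain straight under proportional drag: let V : (0,∞) → ℝ be continuous, c : [0,T] → ℝ be continuous, and let z, r, u_z, u_r : [0,T] → ℝ be differentiable with z(t) > 0, satisfying z' = u_z, r' = u_r, u_z' = c(t)(V(z) − u_z), and u_r' = c(t)( r V(z)/z − u_r ). If r(0) u_z(0) = z(0) u_r(0), then r(t) u_z(t) = z(t) u_r(t) for all t ∈ [0,T] (equivalently u_r/r = u_z/z wherever r ≠ 0), and r(t)/z(t) is constant on [0,T]. -/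
/-!
The quantity `W = r u_z - z u_r` (the Wronskian of `z` and `r`) satisfies the linear equation
`W' = -c W`: the gas-velocity terms cancel because the radial gas velocity is `r V(z) / z`.
Since `c` is bounded on `[0, T]`, Grönwall's inequality forces `W ≡ 0` once `W(0) = 0`, and
`W = 0` is exactly the vanishing of `(r / z)' = -W / z²`.
-/

open Set

theorem eq_zero_of_hasDerivAt_smul_self {E : Type*} [NormedAddCommGroup E] [NormedSpace ℝ E]
    {f : ℝ → E} {g : ℝ → ℝ} {a b : ℝ} (hg : ContinuousOn g (Icc a b))
    (hf : ∀ x ∈ Icc a b, HasDerivAt f (g x • f x) x) (ha : f a = 0) :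
    ∀ x ∈ Icc a b, f x = 0 := by
  obtain ⟨K, hK⟩ := isCompact_Icc.exists_bound_of_continuousOn hg
  refine eq_zero_of_abs_deriv_le_mul_abs_self_of_eq_zero_right (K := K)
    (fun x hx => (hf x hx).continuousAt.continuousWithinAt)
    (fun x hx => (hf x (Ico_subset_Icc_self hx)).hasDerivWithinAt) ha fun x hx => ?_
  rw [norm_smul]
  exact mul_le_mul_of_nonneg_right (hK x (Ico_subset_Icc_self hx)) (norm_nonneg _)

theorem div_eq_div_of_mul_deriv_eq {r z r' z' : ℝ → ℝ} {a b : ℝ}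
    (hr : ∀ x ∈ Icc a b, HasDerivAt r (r' x) x) (hz : ∀ x ∈ Icc a b, HasDerivAt z (z' x) x)
    (hz0 : ∀ x ∈ Icc a b, z x ≠ 0) (h : ∀ x ∈ Icc a b, r x * z' x = z x * r' x) :
    ∀ x ∈ Icc a b, r x / z x = r a / z a := by
  have hdiv : ∀ x ∈ Icc a b, HasDerivAt (fun s => r s / z s) 0 x := fun x hx => by
    refine ((hr x hx).div (hz x hx) (hz0 x hx)).congr_deriv ?_
    rw [mul_comm (r' x), h x hx, sub_self, zero_div]
  exact constant_of_has_deriv_right_zero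
    (fun x hx => (hdiv x hx).continuousAt.continuousWithinAt)
    (fun x hx => (hdiv x (Ico_subset_Icc_self hx)).hasDerivWithinAt)

theorem hasDerivAt_wronskian_of_radial_drag {z r uz ur : ℝ → ℝ} {t c v : ℝ}
    (hz : HasDerivAt z (uz t) t) (hr : HasDerivAt r (ur t) t)
    (huz : HasDerivAt uz (c * (v - uz t)) t)
    (hur : HasDerivAt ur (c * (r t * v / z t - ur t)) t) (hz0 : z t ≠ 0) :
    HasDerivAt (fun s => r s * uz s - z s * ur s) (-c * (r t * uz t - z t * ur t)) t := by
  refine ((hr.mul huz).sub (hz.mul hur)).congr_deriv ?_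
  field_simp
  ring

theorem droplet_trajectories_straight_general
    (V : ℝ → ℝ)
    (T : ℝ)
    (c z r uz ur : ℝ → ℝ)
    (hc : ContinuousOn c (Icc 0 T))
    (hzpos : ∀ t ∈ Icc 0 T, 0 < z t)
    (hz : ∀ t ∈ Icc 0 T, HasDerivAt z (uz t) t)
    (hr : ∀ t ∈ Icc 0 T, HasDerivAt r (ur t) t)
    (huz : ∀ t ∈ Icc 0 T, HasDerivAt uz (c t * (V (z t) - uz t)) t)
    (hur : ∀ t ∈ Icc 0 T, HasDerivAt ur (c t * (r t * V (z t) / z t - ur t)) t)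
    (h0 : r 0 * uz 0 = z 0 * ur 0) :
    (∀ t ∈ Icc 0 T, r t * uz t = z t * ur t) ∧
    (∀ t ∈ Icc 0 T, r t / z t = r 0 / z 0) := by
  have hwronskian := eq_zero_of_hasDerivAt_smul_self
    (f := fun t => r t * uz t - z t * ur t) hc.neg
    (fun t ht => by
      simpa only [smul_eq_mul, Pi.neg_apply] using hasDerivAt_wronskian_of_radial_drag
        (hz t ht) (hr t ht) (huz t ht) (hur t ht) (hzpos t ht).ne')
    (sub_eq_zero.2 h0)
  have hcross : ∀ t ∈ Icc 0 T, r t * uz t = z t * ur t :=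
    fun t ht => sub_eq_zero.1 (hwronskian t ht)
  exact ⟨hcross, div_eq_div_of_mul_deriv_eq hr hz (fun t ht => (hzpos t ht).ne') hcross⟩

/-- Droplet trajectories remain straight under proportional drag: with
continuous `V : (0,∞) → ℝ` and `c : [0,T] → ℝ`, if `z' = u_z`, `r' = u_r`,
`u_z' = c(t)(V(z) - u_z)`, `u_r' = c(t)(r V(z)/z - u_r)` on `[0,T]` with
`z > 0`, and `r(0) u_z(0) = z(0) u_r(0)`, then `r u_z = z u_r` on `[0,T]`
and `r/z` is constant on `[0,T]`. -/
theorem droplet_trajectories_straight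
    (V : ℝ → ℝ) (hV : ContinuousOn V (Ioi (0:ℝ)))
    (T : ℝ) (hT : 0 < T)
    (c z r uz ur : ℝ → ℝ)
    (hc : ContinuousOn c (Icc 0 T))
    (hzpos : ∀ t ∈ Icc 0 T, 0 < z t)
    (hz : ∀ t ∈ Icc 0 T, HasDerivAt z (uz t) t)
    (hr : ∀ t ∈ Icc 0 T, HasDerivAt r (ur t) t)
    (huz : ∀ t ∈ Icc 0 T, HasDerivAt uz (c t * (V (z t) - uz t)) t)
    (hur : ∀ t ∈ Icc 0 T, HasDerivAt ur (c t * (r t * V (z t) / z t - ur t)) t)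
    (h0 : r 0 * uz 0 = z 0 * ur 0) :
    (∀ t ∈ Icc 0 T, r t * uz t = z t * ur t) ∧
    (∀ t ∈ Icc 0 T, r t / z t = r 0 / z 0) :=
  droplet_trajectories_straight_general V T c z r uz ur hc hzpos hz hr huz hur h0
end

section
/- Reduction of the DQMOM nozzle system without coalescence: let R : (0,∞) → ℝ and F : (0,∞)×(0,∞) → ℝ, and let w, v, ξ : I → ℝ be differentiable on an interval I with w > 0, v > 0, ξ > 0, satisfying (wξ)' = 0, (wvξ)' = w R(v), and (wvξ²)' = w ξ R(v) + w v F(v,ξ) on I. Then ξ v' = R(v) and ξ ξ' = F(v,ξ) on I. -/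
/-!
The flux `w ξ` is conserved, so the derivative of any transported density `w g ξ` is
`w ξ g'`: each balance law becomes a material derivative `ξ g'` along the node. Taking
`g = v` gives `ξ v' = R(v)`; taking `g = v ξ` and subtracting `w ξ` times the first gives
`ξ ξ' = F(v, ξ)` after cancelling `w v > 0`.
-/

theorem deriv_mul_mul_eq_of_deriv_mul_eq_zero {𝕜 : Type*} [NontriviallyNormedField 𝕜]
    {w g ξ : 𝕜 → 𝕜} {z : 𝕜} (hw : DifferentiableAt 𝕜 w z) (hg : DifferentiableAt 𝕜 g z)
    (hξ : DifferentiableAt 𝕜 ξ z) (hflux : deriv (fun s => w s * ξ s) z = 0) :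
    deriv (fun s => w s * g s * ξ s) z = w z * ξ z * deriv g z := by
  have hcomm : (fun s => w s * g s * ξ s) = fun s => (w s * ξ s) * g s := by
    funext s; ring
  rw [hcomm, deriv_fun_mul (c := fun s => w s * ξ s) (hw.mul hξ) hg, hflux]
  ring

theorem dqmom_nozzle_reduction_general
    (R : ℝ → ℝ) (F : ℝ → ℝ → ℝ)
    (I : Set ℝ)
    (w v ξ : ℝ → ℝ)
    (hw : ∀ z ∈ I, DifferentiableAt ℝ w z)
    (hv : ∀ z ∈ I, DifferentiableAt ℝ v z)
    (hξ : ∀ z ∈ I, DifferentiableAt ℝ ξ z)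
    (hwpos : ∀ z ∈ I, 0 < w z)
    (hvpos : ∀ z ∈ I, 0 < v z)
    (h1 : ∀ z ∈ I, deriv (fun s => w s * ξ s) z = 0)
    (h2 : ∀ z ∈ I, deriv (fun s => w s * v s * ξ s) z = w z * R (v z))
    (h3 : ∀ z ∈ I, deriv (fun s => w s * v s * ξ s ^ 2) z =
      w z * ξ z * R (v z) + w z * v z * F (v z) (ξ z)) :
    ∀ z ∈ I, ξ z * deriv v z = R (v z) ∧ ξ z * deriv ξ z = F (v z) (ξ z) := by
  intro z hz
  have transport {g : ℝ → ℝ} (hg : DifferentiableAt ℝ g z) :=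
    deriv_mul_mul_eq_of_deriv_mul_eq_zero (hw z hz) hg (hξ z hz) (h1 z hz)
  have hw0 := (hwpos z hz).ne'
  have hvolume : ξ z * deriv v z = R (v z) := by
    apply mul_left_cancel₀ hw0
    linear_combination (transport (hv z hz)).symm.trans (h2 z hz)
  refine ⟨hvolume, ?_⟩
  have hmomentum : deriv (fun s => w s * v s * ξ s ^ 2) z =
      w z * ξ z * (deriv v z * ξ z + v z * deriv ξ z) := by
    have hshape : (fun s => w s * v s * ξ s ^ 2) = fun s => w s * (v s * ξ s) * ξ s := by
      funext s; ring
    rw [hshape, transport (g := fun s => v s * ξ s) ((hv z hz).mul (hξ z hz)),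
      deriv_fun_mul (hv z hz) (hξ z hz)]
  apply mul_left_cancel₀ (mul_ne_zero hw0 (hvpos z hz).ne')
  linear_combination hmomentum.symm.trans (h3 z hz) - w z * ξ z * hvolume

/-- Reduction of the DQMOM nozzle system without coalescence: if positive
differentiable `w, v, ξ` on an interval `I` satisfy `(wξ)' = 0`,
`(wvξ)' = w R(v)`, `(wvξ²)' = w ξ R(v) + w v F(v,ξ)`, then `ξ v' = R(v)` and
`ξ ξ' = F(v,ξ)` on `I`. -/
theorem dqmom_nozzle_reduction
    (R : ℝ → ℝ) (F : ℝ → ℝ → ℝ)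
    (I : Set ℝ)
    (w v ξ : ℝ → ℝ)
    (hw : ∀ z ∈ I, DifferentiableAt ℝ w z)
    (hv : ∀ z ∈ I, DifferentiableAt ℝ v z)
    (hξ : ∀ z ∈ I, DifferentiableAt ℝ ξ z)
    (hwpos : ∀ z ∈ I, 0 < w z)
    (hvpos : ∀ z ∈ I, 0 < v z)
    (hξpos : ∀ z ∈ I, 0 < ξ z)
    (h1 : ∀ z ∈ I, deriv (fun s => w s * ξ s) z = 0)
    (h2 : ∀ z ∈ I, deriv (fun s => w s * v s * ξ s) z = w z * R (v z))
    (h3 : ∀ z ∈ I, deriv (fun s => w s * v s * ξ s ^ 2) z =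
      w z * ξ z * R (v z) + w z * v z * F (v z) (ξ z)) :
    ∀ z ∈ I, ξ z * deriv v z = R (v z) ∧ ξ z * deriv ξ z = F (v z) (ξ z) :=
  dqmom_nozzle_reduction_general R F I w v ξ hw hv hξ hwpos hvpos h1 h2 h3
end
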